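/- In any orthomodular lattice with x +_l y := (x ∨ (x' ∧ y)) ∧ (x' ∨ y'), for elements a, b, c one has b +_l a = b +_l c if and only if b ∧ a = b ∧ c and b' ∧ a = b' ∧ c. -/

import Mathlib

/-- An orthomodular lattice: a bounded lattice with an orthocomplementation
satisfying the orthomodular law. -/
class OML (α : Type*) extends Lattice α, BoundedOrder α, Compl α where
  inf_compl : ∀ x : α, x ⊓ xᶜ = ⊥
  sup_compl : ∀ x : α, x ⊔ xᶜ = ⊤
  compl_compl : ∀ x : α, xᶜᶜ = x
  compl_antitone : ∀ x y : α, x ≤ y → yᶜ ≤ xᶜ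
  orthomodular : ∀ x y : α, x ≤ y → y = x ⊔ (y ⊓ xᶜ)

def pl {α : Type*} [OML α] (x y : α) : α := (x ⊔ (xᶜ ⊓ y)) ⊓ (xᶜ ⊔ yᶜ)

section aux
variable {α : Type*} [OML α]

private lemma oml_compl_sup (x y : α) : (x ⊔ y)ᶜ = xᶜ ⊓ yᶜ := by
  apply le_antisymm
  · exact le_inf (OML.compl_antitone _ _ le_sup_left)
      (OML.compl_antitone _ _ le_sup_right)
  · have h : x ⊔ y ≤ (xᶜ ⊓ yᶜ)ᶜ := by
      apply sup_le
      · have := OML.compl_antitone _ _ (inf_le_left : xᶜ ⊓ yᶜ ≤ xᶜ)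
        rwa [OML.compl_compl] at this
      · have := OML.compl_antitone _ _ (inf_le_right : xᶜ ⊓ yᶜ ≤ yᶜ)
        rwa [OML.compl_compl] at this
    have := OML.compl_antitone _ _ h
    rwa [OML.compl_compl] at this

private lemma oml_compl_inf (x y : α) : (x ⊓ y)ᶜ = xᶜ ⊔ yᶜ := by
  have := oml_compl_sup xᶜ yᶜ
  rw [OML.compl_compl, OML.compl_compl] at this
  rw [← this, OML.compl_compl]

/-- dual orthomodular law -/
private lemma oml_dual {x b : α} (h : x ≤ b) : b ⊓ (bᶜ ⊔ x) = x := by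
  have h' : bᶜ ≤ xᶜ := OML.compl_antitone _ _ h
  have := OML.orthomodular _ _ h'
  have e : x = (bᶜ ⊔ (xᶜ ⊓ bᶜᶜ))ᶜ := by rw [← this, OML.compl_compl]
  have e2 : (bᶜ ⊔ (xᶜ ⊓ bᶜᶜ))ᶜ = b ⊓ (bᶜ ⊔ x) := by
    rw [oml_compl_sup, OML.compl_compl, oml_compl_inf, OML.compl_compl,
      sup_comm x bᶜ]
  rw [← e2]
  exact e.symm

private lemma key1 (a b : α) : bᶜ ⊓ pl b a = bᶜ ⊓ a := by
  have hx : bᶜ ⊓ a ≤ bᶜ := inf_le_left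
  have h1 : bᶜ ⊓ (b ⊔ (bᶜ ⊓ a)) = bᶜ ⊓ a := by
    have := oml_dual (b := bᶜ) hx
    rwa [OML.compl_compl] at this
  have hle : bᶜ ⊓ a ≤ bᶜ ⊔ aᶜ := le_trans inf_le_left le_sup_left
  calc bᶜ ⊓ pl b a = (bᶜ ⊓ (b ⊔ (bᶜ ⊓ a))) ⊓ (bᶜ ⊔ aᶜ) := by
        rw [pl, inf_assoc]
    _ = (bᶜ ⊓ a) ⊓ (bᶜ ⊔ aᶜ) := by rw [h1]
    _ = bᶜ ⊓ a := inf_eq_left.mpr hle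

private lemma key2 (a b : α) : b ⊓ (pl b a)ᶜ = b ⊓ a := by
  have e : (pl b a)ᶜ = (bᶜ ⊓ (bᶜ ⊓ a)ᶜ) ⊔ (b ⊓ a) := by
    rw [pl, oml_compl_inf, oml_compl_sup, oml_compl_sup, OML.compl_compl,
      OML.compl_compl]
  rw [e]
  apply le_antisymm
  · have h1 : (bᶜ ⊓ (bᶜ ⊓ a)ᶜ) ⊔ (b ⊓ a) ≤ bᶜ ⊔ (b ⊓ a) :=
      sup_le_sup_right inf_le_left _
    calc b ⊓ ((bᶜ ⊓ (bᶜ ⊓ a)ᶜ) ⊔ (b ⊓ a)) ≤ b ⊓ (bᶜ ⊔ (b ⊓ a)) :=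
          inf_le_inf_left _ h1
      _ = b ⊓ a := oml_dual inf_le_left
  · exact le_inf inf_le_left le_sup_right

end aux

theorem stmt_13 {α : Type*} [OML α] (a b c : α) :
    pl b a = pl b c ↔ (b ⊓ a = b ⊓ c ∧ bᶜ ⊓ a = bᶜ ⊓ c) := by
  constructor
  · intro h
    refine ⟨?_, ?_⟩
    · rw [← key2 a b, ← key2 c b, h]
    · rw [← key1 a b, ← key1 c b, h]
  · rintro ⟨h1, h2⟩
    have hc : bᶜ ⊔ aᶜ = bᶜ ⊔ cᶜ := by
      rw [← oml_compl_inf, ← oml_compl_inf, h1]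
    rw [pl, pl, h2, hc]
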